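/- Let ε ∈ (0, e^{−1}), a ∈ [0,1], b ∈ [0,1], j ≥ 0 an integer, K a positive integer with K > 1000·ν⁶ where ν := (j+1)·log(K/ε), and s an integer with 0 ≤ s ≤ j. Assume ⌈a⌉ < ⌊a + 2bK⌋ and additionally 2bK ≤ 4·ν³. Then ∑_{m=s}^{j} |w_{s,m,a,b,K}| ≤ (2b)^{−1/2} · (j+1) · 4^{j+2}. -/

import Mathlib

/-!
Write `D = 2bK` and `q = ⌊a + D⌋`. For `m = s + l + 2t`, the `l`-th summand of `w_{s,m,a,b,K}` has
modulus `(2b)^{-1/2} · m!/(s! l! t!) · (|q|/D)^s (|a|/D)^l (8πbK²)^{-t}`. The hypothesis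
`⌈a⌉ < ⌊a + D⌋` gives `1 ≤ D`, hence `0 ≤ q ≤ 2D` and `a ≤ D`, while `K > 1000 ν⁶` gives
`(m - s)² < K`. With `m!/(s! l! t!) ≤ 2^m (l + 2t)^{2t}` the summand is at most
`(2b)^{-1/2} 2^s 2^m 2^{-t}`; summing the geometric factor over `l` bounds `|w_{s,m}|` by
`(2b)^{-1/2} 4^{j+2}`, and there are at most `j + 1` values of `m`.
-/

open scoped BigOperators

/-- The coefficients `w_{s,m,a,b,K}` of the theta algorithm. -/
noncomputable def wcoef (s m K : ℕ) (a b : ℝ) : ℂ :=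
  ((⌊a + 2 * b * K⌋ : ℤ) : ℂ) ^ s *
    ((m.factorial : ℂ) * ((Real.sqrt (2 * Real.pi) : ℝ) : ℂ) *
        Complex.exp (Complex.I * (Real.pi : ℂ) / 4) *
        Complex.exp (3 * (Real.pi : ℂ) * Complex.I * ((m - s : ℕ) : ℂ) / 4) *
        Complex.exp (-(Complex.I) * (Real.pi : ℂ) * (a : ℂ) ^ 2 / (2 * (b : ℂ)))) /
      (((Real.sqrt 2 : ℝ) : ℂ) ^ m * (s.factorial : ℂ) *
        (((2 * Real.sqrt (Real.pi * b)) : ℝ) : ℂ) ^ (m + 1) * (K : ℂ) ^ m) *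
    (((Real.sqrt (2 * Real.pi / b) : ℝ) : ℂ)) ^ s *
    ∑ l ∈ Finset.range (m - s + 1),
      (if (m - s - l) % 2 = 0 then (1 : ℂ) else 0) * (-1 : ℂ) ^ ((m + l - s) / 2) /
          ((l.factorial : ℂ) * (((m - s - l) / 2).factorial : ℂ)) *
        ((a : ℂ) * Complex.exp (-(3 * (Real.pi : ℂ) * Complex.I) / 4) *
          ((Real.sqrt (2 * Real.pi / b) : ℝ) : ℂ)) ^ l

open Real Nat Finset

theorem Nat.factorial_add_le_two_pow_mul (m n : ℕ) : (m + n)! ≤ 2 ^ (m + n) * m ! * n ! := by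
  rw [← add_choose_mul_factorial_mul_factorial, mul_assoc, mul_assoc]
  exact Nat.mul_le_mul_right _ (choose_le_two_pow _ _)

theorem Nat.factorial_add_le_mul_pow (m n : ℕ) : (m + n)! ≤ m ! * (m + n) ^ n := by
  rw [← factorial_mul_ascFactorial]
  exact Nat.mul_le_mul_left _ (ascFactorial_le_pow_add _ _)

theorem factorial_div_le_two_pow_mul (s l t : ℕ) :
    ((s + l + 2 * t)! / (s ! * l ! * t !) : ℝ) ≤ 2 ^ (s + l + 2 * t) * ((l + 2 * t) ^ 2) ^ t := by
  have hnat : (s + l + 2 * t)! ≤ 2 ^ (s + l + 2 * t) * s ! * (l ! * (l + 2 * t) ^ (2 * t)) := by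
    calc (s + l + 2 * t)! = (s + (l + 2 * t))! := by rw [add_assoc]
      _ ≤ 2 ^ (s + (l + 2 * t)) * s ! * (l + 2 * t)! := factorial_add_le_two_pow_mul _ _
      _ ≤ 2 ^ (s + l + 2 * t) * s ! * (l ! * (l + 2 * t) ^ (2 * t)) := by
        rw [← add_assoc]; gcongr; exact factorial_add_le_mul_pow _ _
  rw [div_le_iff₀ (by positivity), ← pow_mul]
  calc ((s + l + 2 * t)! : ℝ) ≤ 2 ^ (s + l + 2 * t) * s ! * (l ! * (l + 2 * t) ^ (2 * t)) := by
        exact_mod_cast hnat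
    _ ≤ 2 ^ (s + l + 2 * t) * s ! * (l ! * (l + 2 * t) ^ (2 * t)) * t ! :=
        le_mul_of_one_le_right (by positivity) (by exact_mod_cast t.factorial_pos)
    _ = _ := by ring

theorem half_pow_div_two_le (k : ℕ) : (1 / 2 : ℝ) ^ (k / 2) ≤ 2 * (3 / 4) ^ k := by
  calc (1 / 2 : ℝ) ^ (k / 2) ≤ ((3 / 4) ^ 2) ^ (k / 2) := by gcongr; norm_num
    _ = 4 / 3 * (3 / 4) ^ (2 * (k / 2) + 1) := by rw [← pow_mul, pow_succ]; ring
    _ ≤ 4 / 3 * (3 / 4) ^ k :=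
        mul_le_mul_of_nonneg_left (pow_le_pow_of_le_one (by norm_num) (by norm_num) (by omega)) (by norm_num)
    _ ≤ 2 * (3 / 4) ^ k := by gcongr; norm_num

theorem sum_range_half_pow_div_two_le (n : ℕ) : ∑ k ∈ range n, (1 / 2 : ℝ) ^ (k / 2) ≤ 8 := by
  calc ∑ k ∈ range n, (1 / 2 : ℝ) ^ (k / 2) ≤ ∑ k ∈ range n, 2 * (3 / 4 : ℝ) ^ k :=
        sum_le_sum fun k _ => half_pow_div_two_le k
    _ = 2 * ∑ k ∈ Ico 0 n, (3 / 4 : ℝ) ^ k := by rw [← mul_sum, range_eq_Ico]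
    _ ≤ 2 * ((3 / 4) ^ 0 / (1 - 3 / 4)) := by
        gcongr; exact geom_sum_Ico_le_of_lt_one (by norm_num) (by norm_num)
    _ = 8 := by norm_num

theorem one_le_of_ceil_lt_floor_add {a x : ℝ} (h : ⌈a⌉ < ⌊a + x⌋) : 1 ≤ x := by
  have h1 : (⌈a⌉ : ℝ) + 1 ≤ ⌊a + x⌋ := by exact_mod_cast Int.add_one_le_iff.mpr h
  linarith [Int.le_ceil a, Int.floor_le (a + x)]

theorem one_le_log_div {x ε : ℝ} (hx : 1 ≤ x) (hε : ε ∈ Set.Ioo 0 (exp (-1))) : 1 ≤ log (x / ε) := by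
  obtain ⟨hε0, hε1⟩ := hε
  rw [le_log_iff_exp_le (by positivity), le_div_iff₀ hε0]
  calc exp 1 * ε ≤ exp 1 * exp (-1) := by gcongr
    _ = 1 := by rw [← exp_add]; norm_num
    _ ≤ x := hx

theorem add_one_sq_lt_of_log_bound {ε : ℝ} (hε : ε ∈ Set.Ioo 0 (exp (-1))) {j K : ℕ}
    (hK : 1000 * (((j : ℝ) + 1) * log (K / ε)) ^ 6 < K) : ((j : ℝ) + 1) ^ 2 < K := by
  have hK1 : (1 : ℝ) ≤ K := Nat.one_le_cast.mpr (Nat.cast_pos.mp (hK.trans_le' (by positivity)))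
  set ν := ((j : ℝ) + 1) * log (K / ε)
  have hj : (j : ℝ) + 1 ≤ ν := le_mul_of_one_le_right (by positivity) (one_le_log_div hK1 hε)
  have hν : 1 ≤ ν := le_trans (by simp) hj
  calc ((j : ℝ) + 1) ^ 2 ≤ ν ^ 2 := by gcongr
    _ ≤ ν ^ 6 := pow_le_pow_right₀ hν (by norm_num)
    _ < K := by nlinarith [pow_pos (zero_lt_one.trans_le hν) 6]

noncomputable def wcoefSummand (s l t K : ℕ) (a b q : ℝ) : ℝ :=
  (√(2 * b))⁻¹ * ((s + l + 2 * t)! / (s ! * l ! * t !)) * (q / (2 * b * K)) ^ s *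
    (a / (2 * b * K)) ^ l * ((8 * π * b * K ^ 2)⁻¹) ^ t

theorem wcoefSummand_eq (s l t K : ℕ) (a b q : ℝ) (hb : 0 < b) (hK : 0 < K) :
    q ^ s * ((s + l + 2 * t)! * √(2 * π)) /
        (√2 ^ (s + l + 2 * t) * s ! * (2 * √(π * b)) ^ (s + l + 2 * t + 1) * K ^ (s + l + 2 * t)) *
      √(2 * π / b) ^ s * (a * √(2 * π / b)) ^ l / (l ! * t !) = wcoefSummand s l t K a b q := by
  have hK : (0 : ℝ) < K := by exact_mod_cast hK
  have h2 := sq_sqrt (zero_le_two (α := ℝ))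
  have hπ := sq_sqrt pi_pos.le
  have hb2 := sq_sqrt hb.le
  have : 0 < √2 := by positivity
  have : 0 < √π := sqrt_pos.2 pi_pos
  have : 0 < √b := sqrt_pos.2 hb
  rw [wcoefSummand, sqrt_mul zero_le_two π, sqrt_mul zero_le_two b, sqrt_mul pi_pos.le b,
    sqrt_div (by positivity) b, sqrt_mul zero_le_two π]
  -- with `√2, √π, √b` as free variables the identity is one of rational functions
  generalize √2 = x at *
  generalize √π = y at *
  generalize √b = z at *
  rw [← hπ, ← hb2]
  rw [show (8 : ℝ) = 2 * 2 * 2 by norm_num, ← h2]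
  simp only [div_pow, mul_pow, inv_pow]
  field_simp
  ring

theorem norm_wcoef_le_sum_wcoefSummand (s m K : ℕ) (a b : ℝ) (hsm : s ≤ m) (hb : 0 < b) (hK : 0 < K) :
    ‖wcoef s m K a b‖ ≤ ∑ l ∈ range (m - s + 1), if (m - s - l) % 2 = 0 then
      wcoefSummand s l ((m - s - l) / 2) K |a| b |(⌊a + 2 * b * K⌋ : ℝ)| else 0 := by
  obtain ⟨h₁, h₂, h₃, h₄⟩ : ‖Complex.exp (Complex.I * π / 4)‖ = 1 ∧
      ‖Complex.exp (3 * π * Complex.I * ((m - s : ℕ) : ℂ) / 4)‖ = 1 ∧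
      ‖Complex.exp (-Complex.I * π * (a : ℂ) ^ 2 / (2 * b))‖ = 1 ∧
      ‖Complex.exp (-(3 * π * Complex.I) / 4)‖ = 1 := by
    simp [Complex.norm_exp, Complex.div_re, ← Complex.ofReal_pow]
  rw [wcoef, norm_mul]
  grw [norm_sum_le]
  rw [mul_sum]
  refine sum_le_sum fun l hl => ?_
  split_ifs with heven
  · obtain ⟨t, rfl⟩ : ∃ t, m = s + l + 2 * t := ⟨(m - s - l) / 2, by grind⟩
    rw [show (s + l + 2 * t - s - l) / 2 = t by omega, ← wcoefSummand_eq _ _ _ _ _ _ _ hb hK]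
    refine le_of_eq ?_
    simp only [norm_mul, norm_div, norm_pow, norm_neg, norm_one, one_pow, Complex.norm_real,
      Complex.norm_natCast, Complex.norm_intCast, norm_eq_abs, abs_of_nonneg (sqrt_nonneg _), abs_two,
      h₁, h₂, h₃, h₄]
    ring
  · simp

theorem pos_of_one_le_two_mul_mul {b : ℝ} {K : ℕ} (hD : 1 ≤ 2 * b * K) : 0 < b ∧ 0 < K := by
  have hK : 0 < K := Nat.pos_of_ne_zero fun h => by norm_num [h] at hD
  exact ⟨(pos_iff_pos_of_mul_pos (by linarith : 0 < b * K)).mpr (Nat.cast_pos.mpr hK), hK⟩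

theorem wcoefSummand_le {s l t K : ℕ} {a b q : ℝ} (hD : 1 ≤ 2 * b * K) (hq0 : 0 ≤ q)
    (hq : q ≤ 2 * (2 * b * K)) (ha0 : 0 ≤ a) (ha : a ≤ 2 * b * K) (hlt : ((l : ℝ) + 2 * t) ^ 2 ≤ K) :
    wcoefSummand s l t K a b q ≤ (√(2 * b))⁻¹ * 2 ^ s * 2 ^ (s + l + 2 * t) * (1 / 2) ^ t := by
  obtain ⟨hb, hK⟩ := pos_of_one_le_two_mul_mul hD
  have hD0 : 0 < 2 * b * K := by linarith
  have hqD : q / (2 * b * K) ≤ 2 := by rw [div_le_iff₀ hD0]; linarith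
  have haD : a / (2 * b * K) ≤ 1 := by rw [div_le_iff₀ hD0]; linarith
  have hdecay : ((l : ℝ) + 2 * t) ^ 2 * (8 * π * b * K ^ 2)⁻¹ ≤ 1 / 2 := by
    have hKD : (K : ℝ) ≤ K * (2 * b * K) := le_mul_of_one_le_right (Nat.cast_nonneg K) hD
    rw [← div_eq_mul_inv, div_le_iff₀ (by positivity)]
    nlinarith [pi_gt_three]
  have hfac : ((s + l + 2 * t)! / (s ! * l ! * t !) : ℝ) * ((8 * π * b * K ^ 2)⁻¹) ^ t ≤
      2 ^ (s + l + 2 * t) * (1 / 2) ^ t :=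
    calc ((s + l + 2 * t)! / (s ! * l ! * t !) : ℝ) * ((8 * π * b * K ^ 2)⁻¹) ^ t
        ≤ 2 ^ (s + l + 2 * t) * ((l + 2 * t) ^ 2) ^ t * ((8 * π * b * K ^ 2)⁻¹) ^ t := by
          gcongr; exact factorial_div_le_two_pow_mul s l t
      _ = 2 ^ (s + l + 2 * t) * (((l : ℝ) + 2 * t) ^ 2 * (8 * π * b * K ^ 2)⁻¹) ^ t := by
          rw [mul_pow, mul_assoc]
      _ ≤ 2 ^ (s + l + 2 * t) * (1 / 2) ^ t := by gcongr
  calc wcoefSummand s l t K a b q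
      = (√(2 * b))⁻¹ * (((s + l + 2 * t)! / (s ! * l ! * t !) : ℝ) * ((8 * π * b * K ^ 2)⁻¹) ^ t) *
          (q / (2 * b * K)) ^ s * (a / (2 * b * K)) ^ l := by rw [wcoefSummand]; ring
    _ ≤ (√(2 * b))⁻¹ * (2 ^ (s + l + 2 * t) * (1 / 2) ^ t) * 2 ^ s * 1 ^ l := by gcongr
    _ = (√(2 * b))⁻¹ * 2 ^ s * 2 ^ (s + l + 2 * t) * (1 / 2) ^ t := by ring

theorem norm_wcoef_le {s m K : ℕ} {a b : ℝ} (hsm : s ≤ m) (hD : 1 ≤ 2 * b * K)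
    (hq : |(⌊a + 2 * b * K⌋ : ℝ)| ≤ 2 * (2 * b * K)) (ha : |a| ≤ 2 * b * K)
    (hm : ((m : ℝ) - s) ^ 2 ≤ K) :
    ‖wcoef s m K a b‖ ≤ (√(2 * b))⁻¹ * 2 ^ s * 2 ^ m * 8 := by
  obtain ⟨hb, hK⟩ := pos_of_one_le_two_mul_mul hD
  calc ‖wcoef s m K a b‖
      ≤ ∑ l ∈ range (m - s + 1), (√(2 * b))⁻¹ * 2 ^ s * 2 ^ m * (1 / 2) ^ ((m - s - l) / 2) := by
        refine (norm_wcoef_le_sum_wcoefSummand s m K a b hsm hb hK).trans (sum_le_sum fun l hl => ?_)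
        split_ifs with heven
        · obtain ⟨t, rfl⟩ : ∃ t, m = s + l + 2 * t := ⟨(m - s - l) / 2, by grind⟩
          rw [show (s + l + 2 * t - s - l) / 2 = t by omega]
          refine wcoefSummand_le hD (abs_nonneg _) hq (abs_nonneg _) ha ?_
          convert hm using 2
          push_cast; ring
        · positivity
    _ = (√(2 * b))⁻¹ * 2 ^ s * 2 ^ m * ∑ k ∈ range (m - s + 1), (1 / 2 : ℝ) ^ (k / 2) := by
        rw [← sum_range_reflect (fun k => (1 / 2 : ℝ) ^ (k / 2)) (m - s + 1), mul_sum]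
        simp only [add_tsub_cancel_right]
    _ ≤ (√(2 * b))⁻¹ * 2 ^ s * 2 ^ m * 8 := by
        gcongr; exact sum_range_half_pow_div_two_le _

theorem two_pow_mul_two_pow_mul_eight_le {s m j : ℕ} (hs : s ≤ j) (hm : m ≤ j) :
    (2 : ℝ) ^ s * 2 ^ m * 8 ≤ 4 ^ (j + 2) :=
  calc (2 : ℝ) ^ s * 2 ^ m * 8 ≤ 2 ^ j * 2 ^ j * 16 := by
        gcongr <;> norm_num
    _ = 4 ^ (j + 2) := by rw [show (4 : ℝ) = 2 * 2 by norm_num, mul_pow]; ring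

theorem norm_wcoef_le_four_pow {s m j K : ℕ} {a b : ℝ} (ha : a ∈ Set.Icc (0 : ℝ) 1)
    (hpq : ⌈a⌉ < ⌊a + 2 * b * K⌋) (hjK : ((j : ℝ) + 1) ^ 2 < K) (hsm : s ≤ m) (hmj : m ≤ j) :
    ‖wcoef s m K a b‖ ≤ (√(2 * b))⁻¹ * 4 ^ (j + 2) := by
  obtain ⟨ha0, ha1⟩ := ha
  have hD : 1 ≤ 2 * b * K := one_le_of_ceil_lt_floor_add hpq
  have hq0 : (0 : ℝ) ≤ ⌊a + 2 * b * K⌋ := by exact_mod_cast (Int.ceil_nonneg ha0).trans hpq.le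
  have hq : (⌊a + 2 * b * K⌋ : ℝ) ≤ 2 * (2 * b * K) := by linarith [Int.floor_le (a + 2 * b * K)]
  have hms : ((m : ℝ) - s) ^ 2 ≤ K := by
    have : (m : ℝ) ≤ j := by exact_mod_cast hmj
    nlinarith [sub_nonneg.2 (Nat.cast_le (α := ℝ).2 hsm), Nat.cast_nonneg (α := ℝ) s]
  calc ‖wcoef s m K a b‖ ≤ (√(2 * b))⁻¹ * 2 ^ s * 2 ^ m * 8 :=
        norm_wcoef_le hsm hD (by rwa [abs_of_nonneg hq0]) (by rw [abs_of_nonneg ha0]; linarith) hms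
    _ = (√(2 * b))⁻¹ * (2 ^ s * 2 ^ m * 8) := by ring
    _ ≤ (√(2 * b))⁻¹ * 4 ^ (j + 2) := by
        gcongr; exact two_pow_mul_two_pow_mul_eight_le (hsm.trans hmj) hmj

theorem wcoef_sum_bound_small_general (ε : ℝ) (hε : ε ∈ Set.Ioo 0 (Real.exp (-1)))
    (a b : ℝ) (ha : a ∈ Set.Icc (0 : ℝ) 1)
    (j K : ℕ)
    (hKbig : 1000 * (((j : ℝ) + 1) * Real.log ((K : ℝ) / ε)) ^ 6 < (K : ℝ))
    (s : ℕ)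
    (hpq : (⌈a⌉ : ℤ) < ⌊a + 2 * b * K⌋) :
    ∑ m ∈ Finset.Icc s j, ‖wcoef s m K a b‖ ≤
      (Real.sqrt (2 * b))⁻¹ * ((j : ℝ) + 1) * 4 ^ (j + 2) := by
  have hjK := add_one_sq_lt_of_log_bound hε hKbig
  calc ∑ m ∈ Icc s j, ‖wcoef s m K a b‖ ≤ #(Icc s j) • ((√(2 * b))⁻¹ * 4 ^ (j + 2)) :=
        sum_le_card_nsmul _ _ _ fun m hm =>
          norm_wcoef_le_four_pow ha hpq hjK (mem_Icc.mp hm).1 (mem_Icc.mp hm).2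
    _ ≤ ((j : ℝ) + 1) * ((√(2 * b))⁻¹ * 4 ^ (j + 2)) := by
        rw [nsmul_eq_mul, Nat.card_Icc]
        gcongr
        exact_mod_cast Nat.sub_le _ _
    _ = (√(2 * b))⁻¹ * ((j : ℝ) + 1) * 4 ^ (j + 2) := by ring

/-- Bound on the coefficient sums `∑_{m=s}^{j} |w_{s,m,a,b,K}|`. -/
theorem wcoef_sum_bound_small (ε : ℝ) (hε : ε ∈ Set.Ioo 0 (Real.exp (-1)))
    (a b : ℝ) (ha : a ∈ Set.Icc (0 : ℝ) 1) (hb : b ∈ Set.Icc (0 : ℝ) 1)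
    (j K : ℕ) (hK : 0 < K)
    (hKbig : 1000 * (((j : ℝ) + 1) * Real.log ((K : ℝ) / ε)) ^ 6 < (K : ℝ))
    (s : ℕ) (hs : s ≤ j)
    (hpq : (⌈a⌉ : ℤ) < ⌊a + 2 * b * K⌋)
    (hsmall : 2 * b * K ≤ 4 * (((j : ℝ) + 1) * Real.log ((K : ℝ) / ε)) ^ 3) :
    ∑ m ∈ Finset.Icc s j, ‖wcoef s m K a b‖ ≤
      (Real.sqrt (2 * b))⁻¹ * ((j : ℝ) + 1) * 4 ^ (j + 2) :=
  wcoef_sum_bound_small_general ε hε a b ha j K hKbig s hpq
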